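/- Let 𝓒 be a hereditary class of digraphs (closed under taking induced subdigraphs) and let c_1, c_2 be integers such that every nonempty digraph in 𝓒 contains a nice set S whose in-part induces a subdigraph of dichromatic number at most c_1 and whose out-part induces a subdigraph of dichromatic number at most c_2. Then every digraph in 𝓒 has dichromatic number at most c_1 + c_2. -/

import Mathlib

/-- A directed cycle (length at least 2, pairwise distinct vertices) in the digraph
with arc relation `A`; a digon counts as a directed cycle of length 2. -/
def HasDicycle {V : Type*} (A : V → V → Prop) : Prop :=
  ∃ (n : ℕ) (f : Fin (n + 2) → V), Function.Injective f ∧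
    ∀ i : Fin (n + 2), A (f i) (f (i + 1))

/-- `c` is a dicoloring of the digraph `A`: no color class contains a directed cycle. -/
def IsDicoloring {V : Type*} (A : V → V → Prop) {k : ℕ} (c : V → Fin k) : Prop :=
  ¬ HasDicycle (fun x y => A x y ∧ c x = c y)

/-- The dichromatic number of the digraph `A`: the least number of colors in a dicoloring. -/
noncomputable def dichromaticNumber {V : Type*} (A : V → V → Prop) : ℕ :=
  sInf {k : ℕ | ∃ c : V → Fin k, IsDicoloring A c}

/-- The digraph `B` appears as an induced subdigraph of the digraph `A`. -/
def HasInducedCopy {V W : Type*} (A : V → V → Prop) (B : W → W → Prop) : Prop :=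
  ∃ f : W → V, Function.Injective f ∧ ∀ x y, B x y ↔ A (f x) (f y)

/-- An oriented graph: at most one arc between any pair of vertices
(in particular no loops and no digons). -/
def IsOrientedGraph {V : Type*} (A : V → V → Prop) : Prop :=
  ∀ x y, A x y → ¬ A y x

/-- The complete symmetric digraph `↔K_k` (all digons present). -/
def symK (k : ℕ) : Fin k → Fin k → Prop := fun x y => x ≠ y

/-- The arcless digraph `K̄_k`. -/
def emptyK (k : ℕ) : Fin k → Fin k → Prop := fun _ _ => False

/-- The transitive tournament `TT_t` (note `TT_2 = →K_2`). -/
def transTour (t : ℕ) : Fin t → Fin t → Prop := fun x y => x < y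

/-- The directed triangle `→C_3`. -/
def dirC3 : Fin 3 → Fin 3 → Prop := fun x y => (y : ℕ) = ((x : ℕ) + 1) % 3

/-- The directed path `P^+(k)`: `k` arcs all oriented in the same direction, on `k+1` vertices. -/
def dirPath (k : ℕ) : Fin (k + 1) → Fin (k + 1) → Prop := fun x y => (x : ℕ) + 1 = (y : ℕ)

/-- `→K_2 + K_1`: a single arc together with an isolated vertex. -/
def K2plusK1 : Fin 3 → Fin 3 → Prop := fun x y => x = 0 ∧ y = 1

/-- `S_2^+`: the oriented star with two arcs leaving the center. -/
def S2plus : Fin 3 → Fin 3 → Prop := fun x y => x = 0 ∧ (y = 1 ∨ y = 2)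

/-- `S_2^-`: the oriented star with two arcs entering the center. -/
def S2minus : Fin 3 → Fin 3 → Prop := fun x y => (x = 1 ∨ x = 2) ∧ y = 0

/-- The oriented graph `R` on vertices `a,…,g = 0,…,6` with arcs
`a→b, b→c, c→a, b→d, d→a, c→e, e→b, f→d, d→g, g→f, f→e, e→g`. -/
def Rdigraph : Fin 7 → Fin 7 → Prop := fun x y =>
  (x = 0 ∧ y = 1) ∨ (x = 1 ∧ y = 2) ∨ (x = 2 ∧ y = 0) ∨ (x = 1 ∧ y = 3) ∨ (x = 3 ∧ y = 0) ∨
  (x = 2 ∧ y = 4) ∨ (x = 4 ∧ y = 1) ∨ (x = 5 ∧ y = 3) ∨ (x = 3 ∧ y = 6) ∨ (x = 6 ∧ y = 5) ∨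
  (x = 5 ∧ y = 4) ∨ (x = 4 ∧ y = 6)

/-- The adjacency pattern of the (undirected) path on `4` vertices. -/
def pathGraph4 : Fin 4 → Fin 4 → Prop := fun x y =>
  (x : ℕ) + 1 = (y : ℕ) ∨ (y : ℕ) + 1 = (x : ℕ)

/-- The underlying undirected graph of `A` contains the pattern `P` as an induced subgraph. -/
def HasInducedUCopy {V W : Type*} (A : V → V → Prop) (P : W → W → Prop) : Prop :=
  ∃ f : W → V, Function.Injective f ∧ ∀ x y, P x y ↔ (A (f x) (f y) ∨ A (f y) (f x))

/-- The underlying undirected graph of `A` is triangle-free. -/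
def UTriangleFree {V : Type*} (A : V → V → Prop) : Prop :=
  ¬ ∃ x y z : V, (A x y ∨ A y x) ∧ (A y z ∨ A z y) ∧ (A x z ∨ A z x)

/-- The underlying undirected graph of `A` contains no `K_4`. -/
def UK4Free {V : Type*} (A : V → V → Prop) : Prop :=
  ¬ ∃ a b c d : V, (A a b ∨ A b a) ∧ (A a c ∨ A c a) ∧ (A a d ∨ A d a) ∧
    (A b c ∨ A c b) ∧ (A b d ∨ A d b) ∧ (A c d ∨ A d c)

/-- The underlying undirected (simple) graph of the digraph `A`. -/
def underlyingGraph {V : Type*} (A : V → V → Prop) : SimpleGraph V where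
  Adj x y := x ≠ y ∧ (A x y ∨ A y x)
  symm := ⟨fun x y h => ⟨Ne.symm h.1, h.2.symm⟩⟩
  loopless := ⟨fun _ h => h.1 rfl⟩

/-!
Induct on the number of vertices. Given a nice set `S`, colour `D - S` by induction with
`c₁ + c₂` colours, the in-part of `S` with the first `c₁` colours and the remaining vertices of
`S`, all in the out-part, with the last `c₂` colours. A monochromatic dicycle of a low colour
cannot leave `S`, as its vertices in `S` lie in the in-part; one of a high colour cannot enter
`S`, as its vertices in `S` lie in the out-part. So it stays inside `S` or inside `D - S`, where
the colourings are acyclic.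
-/

theorem Fin.forall_of_add_one {n : ℕ} {P : Fin (n + 1) → Prop}
    (hstep : ∀ i, P i → P (i + 1)) {i₀ : Fin (n + 1)} (h₀ : P i₀) (i : Fin (n + 1)) : P i := by
  have key : ∀ d : Fin (n + 1), P (i₀ + d) :=
    Fin.induction (by simpa using h₀) fun d hd => by
      rw [← Fin.coeSucc_eq_succ, ← add_assoc]
      exact hstep _ hd
  simpa using key (i - i₀)

theorem Fin.forall_or_forall_not_of_add_one {n : ℕ} {P : Fin (n + 1) → Prop}
    (hstep : ∀ i, P i → P (i + 1)) : (∀ i, P i) ∨ ∀ i, ¬ P i := by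
  by_cases h : ∃ i, P i
  · obtain ⟨i₀, h₀⟩ := h
    exact .inl (Fin.forall_of_add_one hstep h₀)
  · exact .inr (not_exists.mp h)

section Dicoloring

variable {V W : Type*} {A : V → V → Prop}

abbrev induced (A : V → V → Prop) (T : Set V) : T → T → Prop := fun x y => A x.1 y.1

theorem isDicoloring_of_injective {k : ℕ} {c : V → Fin k} (hc : c.Injective) :
    IsDicoloring A c := by
  rintro ⟨m, f, hf, harc⟩
  exact zero_ne_one (hf (hc (harc 0).2))

theorem IsDicoloring.comp_left {k l : ℕ} {c : V → Fin k} (hc : IsDicoloring A c)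
    {φ : Fin k → Fin l} (hφ : φ.Injective) : IsDicoloring A (φ ∘ c) := by
  rintro ⟨m, f, hf, harc⟩
  exact hc ⟨m, f, hf, fun i => ⟨(harc i).1, hφ (harc i).2⟩⟩

theorem IsDicoloring.comp {B : W → W → Prop} {k : ℕ} {c : V → Fin k} (hc : IsDicoloring A c)
    {g : W → V} (hg : g.Injective) (hB : ∀ x y, B x y → A (g x) (g y)) :
    IsDicoloring B (c ∘ g) := by
  rintro ⟨m, f, hf, harc⟩
  exact hc ⟨m, g ∘ f, hg.comp hf, fun i => ⟨hB _ _ (harc i).1, (harc i).2⟩⟩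

theorem dichromaticNumber_le_of_isDicoloring {k : ℕ} {c : V → Fin k} (hc : IsDicoloring A c) :
    dichromaticNumber A ≤ k :=
  Nat.sInf_le ⟨c, hc⟩

theorem dichromaticNumber_le_card [Finite V] : dichromaticNumber A ≤ Nat.card V :=
  dichromaticNumber_le_of_isDicoloring (isDicoloring_of_injective (Finite.equivFin V).injective)

theorem exists_isDicoloring_of_dichromaticNumber_le [Finite V] {k : ℕ}
    (h : dichromaticNumber A ≤ k) : ∃ c : V → Fin k, IsDicoloring A c := by
  obtain ⟨c, hc⟩ : dichromaticNumber A ∈ {k | ∃ c : V → Fin k, IsDicoloring A c} :=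
    Nat.sInf_mem ⟨_, Finite.equivFin V, isDicoloring_of_injective (Finite.equivFin V).injective⟩
  exact ⟨_, hc.comp_left (Fin.castLE_injective h)⟩

theorem dichromaticNumber_le_of_injective [Finite V] {B : W → W → Prop} {g : W → V}
    (hg : g.Injective) (hB : ∀ x y, B x y → A (g x) (g y)) :
    dichromaticNumber B ≤ dichromaticNumber A := by
  obtain ⟨c, hc⟩ := exists_isDicoloring_of_dichromaticNumber_le (A := A) le_rfl
  exact dichromaticNumber_le_of_isDicoloring (hc.comp hg hB)

theorem IsDicoloring.false_of_dicycle_subset {T : Set V} {k l : ℕ} {d : T → Fin l}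
    (hd : IsDicoloring (induced A T) d) {φ : Fin l → Fin k} (hφ : φ.Injective)
    {c : V → Fin k} {m : ℕ} {f : Fin (m + 2) → V} (hf : f.Injective)
    (harc : ∀ i, A (f i) (f (i + 1)) ∧ c (f i) = c (f (i + 1))) (hT : ∀ i, f i ∈ T)
    (hc : ∀ i, c (f i) = φ (d ⟨f i, hT i⟩)) : False :=
  hd ⟨m, fun i => ⟨f i, hT i⟩, fun _ _ h => hf (congrArg Subtype.val h),
    fun i => ⟨(harc i).1, hφ (by rw [← hc, ← hc]; exact (harc i).2)⟩⟩

end Dicoloring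

section NiceSet

variable {V : Type*} {A : V → V → Prop} {S : Set V} {c₁ c₂ : ℕ}

def inPart (A : V → V → Prop) (S : Set V) : Set V := {v | v ∈ S ∧ ∀ w, w ∉ S → ¬ A v w}

def outPart (A : V → V → Prop) (S : Set V) : Set V := {v | v ∈ S ∧ ∀ w, w ∉ S → ¬ A w v}

section Coloring

variable (hS : S ⊆ inPart A S ∪ outPart A S) (cB : ↥Sᶜ → Fin (c₁ + c₂))
  (cIn : inPart A S → Fin c₁) (cOut : outPart A S → Fin c₂)

noncomputable def niceColoring (v : V) : Fin (c₁ + c₂) :=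
  open Classical in
  if hv : v ∈ S then
    if hi : v ∈ inPart A S then Fin.castAdd c₂ (cIn ⟨v, hi⟩)
    else Fin.natAdd c₁ (cOut ⟨v, (hS hv).resolve_left hi⟩)
  else cB ⟨v, hv⟩

theorem niceColoring_of_notMem {v : V} (hv : v ∉ S) :
    niceColoring hS cB cIn cOut v = cB ⟨v, hv⟩ := by
  simp [niceColoring, hv]

theorem niceColoring_of_mem_inPart {v : V} (hi : v ∈ inPart A S) :
    niceColoring hS cB cIn cOut v = Fin.castAdd c₂ (cIn ⟨v, hi⟩) := by
  simp [niceColoring, hi, hi.1]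

theorem niceColoring_of_mem_of_notMem_inPart {v : V} (hv : v ∈ S) (hi : v ∉ inPart A S) :
    niceColoring hS cB cIn cOut v = Fin.natAdd c₁ (cOut ⟨v, (hS hv).resolve_left hi⟩) := by
  simp [niceColoring, hv, hi]

theorem niceColoring_lt_iff_mem_inPart {v : V} (hv : v ∈ S) :
    (niceColoring hS cB cIn cOut v : ℕ) < c₁ ↔ v ∈ inPart A S := by
  by_cases hi : v ∈ inPart A S
  · simp [niceColoring_of_mem_inPart hS cB cIn cOut hi, hi]
  · simp [niceColoring_of_mem_of_notMem_inPart hS cB cIn cOut hv hi, hi]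

theorem isDicoloring_niceColoring (hB : IsDicoloring (induced A Sᶜ) cB)
    (hIn : IsDicoloring (induced A (inPart A S)) cIn)
    (hOut : IsDicoloring (induced A (outPart A S)) cOut) :
    IsDicoloring A (niceColoring hS cB cIn cOut) := by
  set c := niceColoring hS cB cIn cOut
  rintro ⟨m, f, hf, harc⟩
  have hcol : ∀ i, c (f i) = c (f 0) :=
    Fin.forall_of_add_one (fun i hi => (harc i).2.symm.trans hi) rfl
  have hcol_lt_iff (i) : (c (f i) : ℕ) < c₁ ↔ (c (f 0) : ℕ) < c₁ := by rw [hcol i]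
  have outside (hout : ∀ i, f i ∉ S) : False :=
    hB.false_of_dicycle_subset Function.injective_id hf harc hout
      fun i => niceColoring_of_notMem hS cB cIn cOut (hout i)
  by_cases hlow : (c (f 0) : ℕ) < c₁
  · have hin : ∀ i, f i ∈ S → f i ∈ inPart A S := fun i hi =>
      (niceColoring_lt_iff_mem_inPart hS cB cIn cOut hi).mp ((hcol_lt_iff i).mpr hlow)
    obtain hall | hnone := Fin.forall_or_forall_not_of_add_one (P := fun i => f i ∈ S)
      fun i hi => by_contra fun h => (hin i hi).2 _ h (harc i).1
    · exact hIn.false_of_dicycle_subset (Fin.castAdd_injective c₁ c₂) hf harc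
        (fun i => hin i (hall i)) fun i => niceColoring_of_mem_inPart hS cB cIn cOut _
    · exact outside hnone
  · have hnin : ∀ i, f i ∈ S → f i ∉ inPart A S := fun i hi =>
      (niceColoring_lt_iff_mem_inPart hS cB cIn cOut hi).not.mp
        ((hcol_lt_iff i).not.mpr hlow)
    obtain hout | hall := Fin.forall_or_forall_not_of_add_one (P := fun i => f i ∉ S)
      fun i hi h => (((hS h).resolve_left (hnin _ h)).2 _ hi (harc i).1)
    · exact outside hout
    · have hS' : ∀ i, f i ∈ S := fun i => not_not.mp (hall i)
      exact hOut.false_of_dicycle_subset (Fin.natAdd_injective c₂ c₁) hf harc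
        (fun i => (hS (hS' i)).resolve_left (hnin i (hS' i)))
        fun i => niceColoring_of_mem_of_notMem_inPart _ _ _ _ (hS' i) (hnin i (hS' i))

end Coloring

theorem dichromaticNumber_le_add_of_subset_inPart_union_outPart [Finite V]
    (hS : S ⊆ inPart A S ∪ outPart A S)
    (hB : dichromaticNumber (induced A Sᶜ) ≤ c₁ + c₂)
    (hIn : dichromaticNumber (induced A (inPart A S)) ≤ c₁)
    (hOut : dichromaticNumber (induced A (outPart A S)) ≤ c₂) :
    dichromaticNumber A ≤ c₁ + c₂ := by
  obtain ⟨cB, hcB⟩ := exists_isDicoloring_of_dichromaticNumber_le hB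
  obtain ⟨cIn, hcIn⟩ := exists_isDicoloring_of_dichromaticNumber_le hIn
  obtain ⟨cOut, hcOut⟩ := exists_isDicoloring_of_dichromaticNumber_le hOut
  exact dichromaticNumber_le_of_isDicoloring
    (isDicoloring_niceColoring hS cB cIn cOut hcB hcIn hcOut)

end NiceSet

theorem nice_set_bound_general (C : ∀ n : ℕ, (Fin n → Fin n → Prop) → Prop)
    (hhered : ∀ (n : ℕ) (A : Fin n → Fin n → Prop), C n A →
      ∀ (m : ℕ) (B : Fin m → Fin m → Prop),
        (∃ f : Fin m → Fin n, Function.Injective f ∧ ∀ x y, B x y ↔ A (f x) (f y)) → C m B)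
    (c₁ c₂ : ℕ)
    (hnice : ∀ (n : ℕ) (A : Fin n → Fin n → Prop), C n A → 0 < n →
      ∃ S : Set (Fin n), S.Nonempty ∧
        (∀ v ∈ S, (∀ w, w ∉ S → ¬ A v w) ∨ (∀ w, w ∉ S → ¬ A w v)) ∧
        dichromaticNumber
          (fun x y : {v : Fin n // v ∈ S ∧ ∀ w, w ∉ S → ¬ A v w} => A x.1 y.1) ≤ c₁ ∧
        dichromaticNumber
          (fun x y : {v : Fin n // v ∈ S ∧ ∀ w, w ∉ S → ¬ A w v} => A x.1 y.1) ≤ c₂) :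
    ∀ (n : ℕ) (A : Fin n → Fin n → Prop), C n A → dichromaticNumber A ≤ c₁ + c₂ := by
  intro n
  induction n using Nat.strong_induction_on with
  | _ n IH =>
  intro A hA
  rcases n.eq_zero_or_pos with rfl | hn
  · exact dichromaticNumber_le_card.trans (by simp)
  obtain ⟨S, ⟨v, hv⟩, hS, hIn, hOut⟩ := hnice n A hA hn
  let e := Finite.equivFin ↥Sᶜ
  let B : Fin (Nat.card ↥Sᶜ) → Fin (Nat.card ↥Sᶜ) → Prop :=
    fun x y => A (e.symm x) (e.symm y)
  have hB : C _ B := hhered n A hA _ B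
    ⟨fun x => e.symm x, Subtype.val_injective.comp e.symm.injective, fun _ _ => Iff.rfl⟩
  have hcard : Nat.card ↥Sᶜ < n := by
    simpa only [Nat.card_eq_fintype_card, Fintype.card_fin] using
      Finite.card_subtype_lt (p := (· ∈ Sᶜ)) (not_not_intro hv)
  refine dichromaticNumber_le_add_of_subset_inPart_union_outPart
    (fun v hv => (hS v hv).imp (⟨hv, ·⟩) (⟨hv, ·⟩)) ?_ hIn hOut
  calc dichromaticNumber (induced A Sᶜ) ≤ dichromaticNumber B :=
        dichromaticNumber_le_of_injective e.injective fun x y h => by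
          simpa only [B, Equiv.symm_apply_apply] using h
    _ ≤ c₁ + c₂ := IH _ hcard B hB

/-- If every nonempty digraph of a hereditary class `𝓒` contains a nice set whose in-part
has dichromatic number at most `c₁` and whose out-part has dichromatic number at most `c₂`,
then every digraph in `𝓒` has dichromatic number at most `c₁ + c₂`. -/
theorem nice_set_bound (C : ∀ n : ℕ, (Fin n → Fin n → Prop) → Prop)
    (hdigraph : ∀ (n : ℕ) (A : Fin n → Fin n → Prop), C n A → Irreflexive A)
    (hhered : ∀ (n : ℕ) (A : Fin n → Fin n → Prop), C n A →
      ∀ (m : ℕ) (B : Fin m → Fin m → Prop),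
        (∃ f : Fin m → Fin n, Function.Injective f ∧ ∀ x y, B x y ↔ A (f x) (f y)) → C m B)
    (c₁ c₂ : ℕ)
    (hnice : ∀ (n : ℕ) (A : Fin n → Fin n → Prop), C n A → 0 < n →
      ∃ S : Set (Fin n), S.Nonempty ∧
        (∀ v ∈ S, (∀ w, w ∉ S → ¬ A v w) ∨ (∀ w, w ∉ S → ¬ A w v)) ∧
        dichromaticNumber
          (fun x y : {v : Fin n // v ∈ S ∧ ∀ w, w ∉ S → ¬ A v w} => A x.1 y.1) ≤ c₁ ∧
        dichromaticNumber
          (fun x y : {v : Fin n // v ∈ S ∧ ∀ w, w ∉ S → ¬ A w v} => A x.1 y.1) ≤ c₂) :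
    ∀ (n : ℕ) (A : Fin n → Fin n → Prop), C n A → dichromaticNumber A ≤ c₁ + c₂ :=
  nice_set_bound_general C hhered c₁ c₂ hnice
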